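/- arXiv:2311.03172 — 3 statements merged into one kernel-verified Lean document; each statement's English description precedes it below -/
import Mathlib

section
/- Let (S, μ) be a measure space with μ σ-finite, let p₀, p₁ : S → ℝ be nonnegative measurable probability densities with respect to μ, let π₀, π₁ ≥ 0 with π₀ + π₁ = 1, let P_e = ∫_S min(π₀ p₀(s), π₁ p₁(s)) dμ(s) and ρ = ∫_S √(p₀(s) p₁(s)) dμ(s). Then P_e (1 − P_e) ≥ π₀ π₁ ρ². -/
open MeasureTheory

/-!
Write `m = min (π₀ p₀) (π₁ p₁)` and `M = max (π₀ p₀) (π₁ p₁)`. Then `∫ m = P_e`, and since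
`m + M = π₀ p₀ + π₁ p₁` also `∫ M = 1 - P_e`. Since `m M = π₀ π₁ p₀ p₁`, the Cauchy–Schwarz
inequality for `√m` and `√M` reads `(√(π₀ π₁) ρ)² = (∫ √(m M))² ≤ (∫ m) (∫ M) = P_e (1 - P_e)`.
-/

namespace MeasureTheory

variable {α : Type*} [MeasurableSpace α] {μ : Measure α}

theorem integral_min_add_integral_max {f g : α → ℝ} (hf : Integrable f μ) (hg : Integrable g μ) :
    ∫ a, min (f a) (g a) ∂μ + ∫ a, max (f a) (g a) ∂μ = ∫ a, f a ∂μ + ∫ a, g a ∂μ := by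
  have hmin : Integrable (fun a => min (f a) (g a)) μ := hf.inf hg
  have hmax : Integrable (fun a => max (f a) (g a)) μ := hf.sup hg
  rw [← integral_add hmin hmax, ← integral_add hf hg]
  exact integral_congr_ae (Filter.Eventually.of_forall fun a => min_add_max (f a) (g a))

theorem Integrable.memLp_two_sqrt {f : α → ℝ} (hf : Integrable f μ) (hf0 : 0 ≤ᵐ[μ] f) :
    MemLp (fun a => √(f a)) 2 μ := by
  refine (memLp_two_iff_integrable_sq
    (Real.continuous_sqrt.comp_aestronglyMeasurable hf.aestronglyMeasurable)).2 ?_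
  refine hf.congr ?_
  filter_upwards [hf0] with a ha
  exact (Real.sq_sqrt ha).symm

theorem integral_sqrt_rpow_two {f : α → ℝ} (hf0 : 0 ≤ᵐ[μ] f) :
    ∫ a, √(f a) ^ (2 : ℝ) ∂μ = ∫ a, f a ∂μ := by
  refine integral_congr_ae ?_
  filter_upwards [hf0] with a ha
  rw [Real.rpow_two, Real.sq_sqrt ha]

theorem integral_sqrt_mul_le {f g : α → ℝ} (hf0 : 0 ≤ᵐ[μ] f) (hg0 : 0 ≤ᵐ[μ] g)
    (hf : Integrable f μ) (hg : Integrable g μ) :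
    ∫ a, √(f a * g a) ∂μ ≤ √(∫ a, f a ∂μ) * √(∫ a, g a ∂μ) := by
  have hsplit : ∫ a, √(f a * g a) ∂μ = ∫ a, √(f a) * √(g a) ∂μ := by
    refine integral_congr_ae ?_
    filter_upwards [hf0] with a ha
    exact Real.sqrt_mul ha _
  have holder := integral_mul_le_Lp_mul_Lq_of_nonneg Real.HolderConjugate.two_two
    (Filter.Eventually.of_forall fun a => Real.sqrt_nonneg (f a))
    (Filter.Eventually.of_forall fun a => Real.sqrt_nonneg (g a))
    (by simpa using hf.memLp_two_sqrt hf0) (by simpa using hg.memLp_two_sqrt hg0)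
  rwa [integral_sqrt_rpow_two hf0, integral_sqrt_rpow_two hg0, ← Real.sqrt_eq_rpow,
    ← Real.sqrt_eq_rpow, ← hsplit] at holder

theorem sq_integral_sqrt_mul_le {f g : α → ℝ} (hf0 : 0 ≤ᵐ[μ] f) (hg0 : 0 ≤ᵐ[μ] g)
    (hf : Integrable f μ) (hg : Integrable g μ) :
    (∫ a, √(f a * g a) ∂μ) ^ 2 ≤ (∫ a, f a ∂μ) * ∫ a, g a ∂μ := by
  calc (∫ a, √(f a * g a) ∂μ) ^ 2 ≤ (√(∫ a, f a ∂μ) * √(∫ a, g a ∂μ)) ^ 2 :=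
        pow_le_pow_left₀ (integral_nonneg fun a => Real.sqrt_nonneg _)
          (integral_sqrt_mul_le hf0 hg0 hf hg) 2
    _ = (∫ a, f a ∂μ) * ∫ a, g a ∂μ := by
        rw [mul_pow, Real.sq_sqrt (integral_nonneg_of_ae hf0),
          Real.sq_sqrt (integral_nonneg_of_ae hg0)]

end MeasureTheory

theorem bayes_error_mul_one_sub_ge_priors_mul_bhattacharyya_sq_general
    {S : Type*} [MeasurableSpace S] (μ : Measure S)
    (p₀ p₁ : S → ℝ)
    (hp₀ : ∀ s, 0 ≤ p₀ s) (hp₁ : ∀ s, 0 ≤ p₁ s)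
    (hint₀ : ∫ s, p₀ s ∂μ = 1) (hint₁ : ∫ s, p₁ s ∂μ = 1)
    (π₀ π₁ : ℝ) (hπ₀ : 0 ≤ π₀) (hπ₁ : 0 ≤ π₁) (hπ : π₀ + π₁ = 1)
    (Pe ρ : ℝ) (hPe : Pe = ∫ s, min (π₀ * p₀ s) (π₁ * p₁ s) ∂μ)
    (hρ : ρ = ∫ s, Real.sqrt (p₀ s * p₁ s) ∂μ) :
    π₀ * π₁ * ρ ^ 2 ≤ Pe * (1 - Pe) := by
  set q₀ : S → ℝ := fun s => π₀ * p₀ s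
  set q₁ : S → ℝ := fun s => π₁ * p₁ s
  have hq₀ : Integrable q₀ μ := (integrable_of_integral_eq_one hint₀).const_mul π₀
  have hq₁ : Integrable q₁ μ := (integrable_of_integral_eq_one hint₁).const_mul π₁
  have hq₀0 : ∀ s, 0 ≤ q₀ s := fun s => mul_nonneg hπ₀ (hp₀ s)
  have hq₁0 : ∀ s, 0 ≤ q₁ s := fun s => mul_nonneg hπ₁ (hp₁ s)
  have hmax : ∫ s, max (q₀ s) (q₁ s) ∂μ = 1 - Pe := by
    have hsum := integral_min_add_integral_max hq₀ hq₁
    rw [integral_const_mul, integral_const_mul, hint₀, hint₁, ← hPe] at hsum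
    linarith
  have hprod : ∫ s, √(min (q₀ s) (q₁ s) * max (q₀ s) (q₁ s)) ∂μ = √(π₀ * π₁) * ρ := by
    simp_rw [min_mul_max, q₀, q₁, hρ, ← integral_const_mul, ← Real.sqrt_mul (mul_nonneg hπ₀ hπ₁)]
    congr 1 with s
    ring_nf
  have cs := sq_integral_sqrt_mul_le (μ := μ)
    (Filter.Eventually.of_forall fun s => le_min (hq₀0 s) (hq₁0 s))
    (Filter.Eventually.of_forall fun s => (hq₀0 s).trans (le_max_left _ _))
    (hq₀.inf hq₁) (hq₀.sup hq₁)
  rwa [hprod, hmax, ← hPe, mul_pow, Real.sq_sqrt (mul_nonneg hπ₀ hπ₁)] at cs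

/-- With Bayes error `P_e = ∫ min (π₀ p₀) (π₁ p₁) dμ` and Bhattacharyya
coefficient `ρ = ∫ √(p₀ p₁) dμ`, one has `P_e (1 − P_e) ≥ π₀ π₁ ρ²`. -/
theorem bayes_error_mul_one_sub_ge_priors_mul_bhattacharyya_sq
    {S : Type*} [MeasurableSpace S] (μ : Measure S) [SigmaFinite μ]
    (p₀ p₁ : S → ℝ) (hp₀m : Measurable p₀) (hp₁m : Measurable p₁)
    (hp₀ : ∀ s, 0 ≤ p₀ s) (hp₁ : ∀ s, 0 ≤ p₁ s)
    (hint₀ : ∫ s, p₀ s ∂μ = 1) (hint₁ : ∫ s, p₁ s ∂μ = 1)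
    (π₀ π₁ : ℝ) (hπ₀ : 0 ≤ π₀) (hπ₁ : 0 ≤ π₁) (hπ : π₀ + π₁ = 1)
    (Pe ρ : ℝ) (hPe : Pe = ∫ s, min (π₀ * p₀ s) (π₁ * p₁ s) ∂μ)
    (hρ : ρ = ∫ s, Real.sqrt (p₀ s * p₁ s) ∂μ) :
    π₀ * π₁ * ρ ^ 2 ≤ Pe * (1 - Pe) :=
  bayes_error_mul_one_sub_ge_priors_mul_bhattacharyya_sq_general μ p₀ p₁ hp₀ hp₁ hint₀ hint₁ π₀ π₁
    hπ₀ hπ₁ hπ Pe ρ hPe hρ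
end

section
/- Fano's inequality, binary case: let Ω be a probability space, X a finite type, x : Ω → X a random variable, Y : Ω → Bool a binary random variable, and g : X → Bool any (deterministic) decision rule, with error probability P_e = ℙ[Y ≠ g(x)]. Then the conditional entropy satisfies H(Y | x) ≤ h(P_e), where h(p) = −p log p − (1−p) log(1−p) is the binary entropy function. In particular, a large conditional entropy H(Y | x) forces the error of every classifier based on x to be bounded away from 0 and 1. -/
open MeasureTheory

/-- Conditional Shannon entropy `H(X | Z) = ∑_z ℙ[Z = z] H(X | Z = z)` of finite-valued
random variables, written as `∑_z ∑_x ℙ[X = x, Z = z] log (ℙ[Z = z] / ℙ[X = x, Z = z])`. -/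
noncomputable def condEntropy {Ω 𝒳 𝒵 : Type*} [MeasurableSpace Ω] [Fintype 𝒳] [Fintype 𝒵]
    (μ : Measure Ω) (X : Ω → 𝒳) (Z : Ω → 𝒵) : ℝ :=
  ∑ z : 𝒵, ∑ x : 𝒳,
    (μ {ω | X ω = x ∧ Z ω = z}).toReal *
      Real.log ((μ {ω | Z ω = z}).toReal / (μ {ω | X ω = x ∧ Z ω = z}).toReal)

/-- The binary entropy function `h(p) = −p log p − (1 − p) log (1 − p)`. -/
noncomputable def binaryEntropy (p : ℝ) : ℝ :=
  -p * Real.log p - (1 - p) * Real.log (1 - p)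

-- auxiliary analytic lemma
lemma fano_aux {r q s : ℝ} (hr : 0 ≤ r) (hq : r ≤ q) (hs : r ≤ s) :
    r * Real.log (q / r) + r * Real.log s ≤ q * s - r := by
  rcases eq_or_lt_of_le hr with h | h
  · have hq0 : 0 ≤ q := le_trans hr hq
    have hs0 : 0 ≤ s := le_trans hr hs
    rw [← h]
    simpa using mul_nonneg hq0 hs0
  · have hqp : 0 < q := h.trans_le hq
    have hsp : 0 < s := h.trans_le hs
    have h1 : Real.log (q / r) + Real.log s = Real.log (q * s / r) := by
      rw [← Real.log_mul (by positivity) (ne_of_gt hsp), div_mul_eq_mul_div]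
    have h2 : Real.log (q * s / r) ≤ q * s / r - 1 :=
      Real.log_le_sub_one_of_pos (by positivity)
    calc r * Real.log (q / r) + r * Real.log s = r * Real.log (q * s / r) := by
            rw [← h1]; ring
      _ ≤ r * (q * s / r - 1) := by nlinarith
      _ = q * s - r := by field_simp

-- partition lemma
lemma fano_part {Ω 𝒳 : Type*} [MeasurableSpace Ω] [Fintype 𝒳] (μ : Measure Ω)
    (S : Set Ω) (x : Ω → 𝒳) (h : ∀ z, MeasurableSet {ω | ω ∈ S ∧ x ω = z}) :
    μ S = ∑ z : 𝒳, μ {ω | ω ∈ S ∧ x ω = z} := by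
  classical
  have hS : S = ⋃ z ∈ (Finset.univ : Finset 𝒳), {ω | ω ∈ S ∧ x ω = z} := by
    ext ω; simp
  conv_lhs => rw [hS]
  rw [measure_biUnion_finset ?_ (fun z _ => h z)]
  intro a _ b _ hab
  simp only [Function.onFun]
  rw [Set.disjoint_left]
  rintro ω ⟨_, ha⟩ ⟨_, hb⟩
  exact hab (ha ▸ hb ▸ rfl)

/-- **Fano's inequality, binary case.** For any decision rule `g : 𝒳 → Bool`
with error probability `P_e = ℙ[Y ≠ g(x)]`, one has `H(Y | x) ≤ h(P_e)`. -/
theorem fano_binary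
    {Ω 𝒳 : Type*} [MeasurableSpace Ω] [Fintype 𝒳]
    [MeasurableSpace 𝒳] [MeasurableSingletonClass 𝒳]
    (μ : Measure Ω) [IsProbabilityMeasure μ]
    (x : Ω → 𝒳) (Y : Ω → Bool) (hx : Measurable x) (hY : Measurable Y)
    (g : 𝒳 → Bool) :
    condEntropy μ Y x ≤ binaryEntropy ((μ {ω | Y ω ≠ g (x ω)}).toReal) := by
  classical
  -- measurability of basic sets
  have hxset : ∀ z : 𝒳, MeasurableSet {ω | x ω = z} := fun z => hx (measurableSet_singleton z)
  have hYset : ∀ b : Bool, MeasurableSet {ω | Y ω = b} := fun b => hY (measurableSet_singleton b)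
  have hA : ∀ (y : Bool) (z : 𝒳), MeasurableSet {ω | Y ω = y ∧ x ω = z} :=
    fun y z => (hYset y).inter (hxset z)
  -- key set identity relating E := Y xor g∘x with Y
  have hsetE : ∀ (e : Bool) (z : 𝒳),
      {ω | (xor (Y ω) (g (x ω)) = e) ∧ x ω = z} = {ω | Y ω = xor e (g z) ∧ x ω = z} := by
    intro e z; ext ω
    simp only [Set.mem_setOf_eq]
    constructor <;> rintro ⟨h1, h2⟩ <;> subst h2 <;> refine ⟨?_, rfl⟩ <;>
      revert h1 <;> cases Y ω <;> cases g (x ω) <;> cases e <;> decide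
  -- notation
  set q : 𝒳 → ℝ := fun z => (μ {ω | x ω = z}).toReal with hqdef
  set r : Bool → 𝒳 → ℝ := fun e z => (μ {ω | Y ω = xor e (g z) ∧ x ω = z}).toReal with hrdef
  set Se : Bool → Set Ω := fun e => {ω | xor (Y ω) (g (x ω)) = e} with hSedef
  have hSemeas : ∀ e, MeasurableSet (Se e) := by
    intro e
    have : Se e = ⋃ z ∈ (Finset.univ : Finset 𝒳), {ω | Y ω = xor e (g z) ∧ x ω = z} := by
      ext ω
      simp only [Set.mem_iUnion, Finset.mem_univ, true_and, exists_prop, hSedef]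
      constructor
      · intro h
        exact ⟨x ω, (Set.ext_iff.mp (hsetE e (x ω)) ω).mp ⟨h, rfl⟩⟩
      · rintro ⟨z, hz⟩
        have : ω ∈ {ω | (xor (Y ω) (g (x ω)) = e) ∧ x ω = z} := (hsetE e z) ▸ hz
        exact this.1
    rw [this]
    exact Finset.measurableSet_biUnion _ (fun z _ => hA _ z)
  set s : Bool → ℝ := fun e => (μ (Se e)).toReal with hsdef
  -- finiteness
  have hfin : ∀ A : Set Ω, μ A ≠ ⊤ := fun A => (measure_lt_top μ A).ne
  -- partitioning along x
  have hrow : ∀ e, μ (Se e) = ∑ z : 𝒳, μ {ω | Y ω = xor e (g z) ∧ x ω = z} := by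
    intro e
    have := fano_part μ (Se e) x (by
      intro z
      have : {ω | ω ∈ Se e ∧ x ω = z} = {ω | Y ω = xor e (g z) ∧ x ω = z} := hsetE e z
      rw [this]; exact hA _ z)
    rw [this]
    exact Finset.sum_congr rfl fun z _ => by rw [show {ω | ω ∈ Se e ∧ x ω = z} = {ω | Y ω = xor e (g z) ∧ x ω = z} from hsetE e z]
  have hrow' : ∀ e, s e = ∑ z : 𝒳, r e z := by
    intro e
    rw [hsdef]
    simp only [hrow e]
    rw [ENNReal.toReal_sum (fun z _ => hfin _)]
  -- sum of q is 1
  have hqsum : ∑ z : 𝒳, q z = 1 := by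
    have h1 : μ (Set.univ : Set Ω) = ∑ z : 𝒳, μ {ω | ω ∈ (Set.univ : Set Ω) ∧ x ω = z} :=
      fano_part μ Set.univ x (fun z => by
        have : {ω | ω ∈ (Set.univ : Set Ω) ∧ x ω = z} = {ω | x ω = z} := by ext ω; simp
        rw [this]; exact hxset z)
    have h2 : ∀ z : 𝒳, {ω | ω ∈ (Set.univ : Set Ω) ∧ x ω = z} = {ω | x ω = z} := by
      intro z; ext ω; simp
    rw [measure_univ] at h1
    simp only [h2] at h1
    have := congrArg ENNReal.toReal h1
    rw [ENNReal.toReal_sum (fun z _ => hfin _)] at this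
    simpa using this.symm
  -- Se false is complement of Se true
  have hScompl : Se false = (Se true)ᶜ := by
    ext ω; simp [hSedef]
  have hs_false : s false = 1 - s true := by
    rw [hsdef]
    simp only [hScompl]
    rw [prob_compl_eq_one_sub (hSemeas true)]
    rw [ENNReal.toReal_sub_of_le prob_le_one ENNReal.one_ne_top]
    simp
  -- Pe = s true
  have hPe : (μ {ω | Y ω ≠ g (x ω)}).toReal = s true := by
    have : {ω | Y ω ≠ g (x ω)} = Se true := by
      ext ω; simp [hSedef, Bool.xor_iff_ne]
    rw [this]
  -- bounds
  have hr_nonneg : ∀ e z, 0 ≤ r e z := fun e z => ENNReal.toReal_nonneg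
  have hr_le_q : ∀ e z, r e z ≤ q z := fun e z =>
    ENNReal.toReal_mono (hfin _) (measure_mono (fun ω hω => hω.2))
  have hr_le_s : ∀ e z, r e z ≤ s e := by
    intro e z
    apply ENNReal.toReal_mono (hfin _)
    apply measure_mono
    intro ω hω
    rw [show Se e = {ω | (xor (Y ω) (g (x ω)) = e)} from rfl]
    exact ((hsetE e z) ▸ hω : ω ∈ {ω | (xor (Y ω) (g (x ω)) = e) ∧ x ω = z}).1
  -- Step A : condEntropy μ Y x rewritten
  have stepA : condEntropy μ Y x = ∑ z : 𝒳, ∑ e : Bool, r e z * Real.log (q z / r e z) := by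
    unfold condEntropy
    refine Finset.sum_congr rfl fun z _ => ?_
    rw [Fintype.sum_bool, Fintype.sum_bool]
    cases hgz : g z <;> simp [hrdef, hqdef, hgz] <;> try ring
  -- Step B : binary entropy as sum
  have stepB : binaryEntropy (s true) = ∑ e : Bool, s e * (-Real.log (s e)) := by
    rw [Fintype.sum_bool, hs_false, binaryEntropy]
    ring
  have hRHS : ∑ e : Bool, s e * (-Real.log (s e)) = ∑ e : Bool, ∑ z : 𝒳, r e z * (-Real.log (s e)) := by
    refine Finset.sum_congr rfl fun e _ => ?_
    rw [hrow' e, Finset.sum_mul]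
  have key : ∀ e z, r e z * Real.log (q z / r e z) - r e z * (-Real.log (s e)) ≤ q z * s e - r e z := by
    intro e z
    have := fano_aux (hr_nonneg e z) (hr_le_q e z) (hr_le_s e z)
    linarith
  have rhs_zero : ∑ e : Bool, ∑ z : 𝒳, (q z * s e - r e z) = 0 := by
    have h : ∀ e : Bool, ∑ z : 𝒳, (q z * s e - r e z) = s e - s e := by
      intro e
      rw [Finset.sum_sub_distrib, ← hrow' e, ← Finset.sum_mul, hqsum, one_mul]
    simp [h]
  have main : ∑ e : Bool, ∑ z : 𝒳, r e z * Real.log (q z / r e z)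
      ≤ ∑ e : Bool, ∑ z : 𝒳, r e z * (-Real.log (s e)) := by
    have h1 : ∑ e : Bool, ∑ z : 𝒳, (r e z * Real.log (q z / r e z) - r e z * (-Real.log (s e))) ≤ 0 := by
      calc ∑ e : Bool, ∑ z : 𝒳, (r e z * Real.log (q z / r e z) - r e z * (-Real.log (s e)))
          ≤ ∑ e : Bool, ∑ z : 𝒳, (q z * s e - r e z) :=
            Finset.sum_le_sum fun e _ => Finset.sum_le_sum fun z _ => key e z
        _ = 0 := rhs_zero
    have h2 : ∑ e : Bool, ∑ z : 𝒳, (r e z * Real.log (q z / r e z) - r e z * (-Real.log (s e)))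
        = (∑ e : Bool, ∑ z : 𝒳, r e z * Real.log (q z / r e z))
          - ∑ e : Bool, ∑ z : 𝒳, r e z * (-Real.log (s e)) := by
      rw [← Finset.sum_sub_distrib]
      exact Finset.sum_congr rfl fun e _ => by rw [← Finset.sum_sub_distrib]
    linarith [h2 ▸ h1]
  rw [hPe]
  calc condEntropy μ Y x
      = ∑ z : 𝒳, ∑ e : Bool, r e z * Real.log (q z / r e z) := stepA
    _ = ∑ e : Bool, ∑ z : 𝒳, r e z * Real.log (q z / r e z) := Finset.sum_comm
    _ ≤ ∑ e : Bool, ∑ z : 𝒳, r e z * (-Real.log (s e)) := main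
    _ = ∑ e : Bool, s e * (-Real.log (s e)) := hRHS.symm
    _ = binaryEntropy (s true) := stepB.symm
end

section
/- Let Ω be a probability space, X and Z finite types, n ≥ 1, let X₁, …, Xₙ : Ω → X be jointly independent and identically distributed random variables, and let Z : Ω → Z be any random variable. Then for every j ∈ {1, …, n}, the mutual information between the joint training tuple and Z satisfies I((X₁, …, Xₙ); Z) ≤ (n − 1)·H(X₁) + I(X_j; Z). -/
/-!
Gibbs' inequality against the product of the marginals gives subadditivity,
`H(X₁, …, Xₙ) ≤ ∑ᵢ H(Xᵢ) = n · H(X₁)`. On the other side, `X_j` is a function of the tuple, and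
passing to a function of a variable merges atoms of each conditional law; since `P ↦ P log (c / P)`
only grows when mass is split, `H(X_j | Z) ≤ H(X₁, …, Xₙ | Z)`. Subtracting the two gives the bound.
-/

open MeasureTheory ProbabilityTheory

/-- Shannon entropy `H(X) = −∑_a ℙ[X = a] log ℙ[X = a]` of a finite-valued random variable. -/
noncomputable def entropy {Ω 𝒳 : Type*} [MeasurableSpace Ω] [Fintype 𝒳]
    (μ : Measure Ω) (X : Ω → 𝒳) : ℝ :=
  ∑ a : 𝒳, -((μ {ω | X ω = a}).toReal * Real.log ((μ {ω | X ω = a}).toReal))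

/-- Mutual information `I(X; Z) = H(X) − H(X | Z)` of finite-valued random variables. -/
noncomputable def mutualInfo {Ω 𝒳 𝒵 : Type*} [MeasurableSpace Ω] [Fintype 𝒳] [Fintype 𝒵]
    (μ : Measure Ω) (X : Ω → 𝒳) (Z : Ω → 𝒵) : ℝ :=
  entropy μ X - condEntropy μ X Z

open Finset Real

section FiniteSums

variable {α β : Type*} [Fintype α] [Fintype β]

lemma negMulLog_le_neg_mul_log_add_sub {p q : ℝ} (hp : 0 ≤ p) (hq : 0 ≤ q)
    (hpq : 0 < p → 0 < q) :
    negMulLog p ≤ -(p * log q) + (q - p) := by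
  rcases hp.eq_or_lt with rfl | hp
  · simpa using hq
  have hq := hpq hp
  have hlog : log (q / p) ≤ q / p - 1 := log_le_sub_one_of_pos (div_pos hq hp)
  rw [log_div hq.ne' hp.ne'] at hlog
  have := mul_le_mul_of_nonneg_left hlog hp.le
  rw [mul_sub, mul_sub, mul_div_cancel₀ _ hp.ne', mul_one] at this
  rw [negMulLog]
  linarith

lemma sum_negMulLog_le_sum_neg_mul_log {p q : α → ℝ} (hp : ∀ a, 0 ≤ p a) (hq : ∀ a, 0 ≤ q a)
    (hpq : ∀ a, 0 < p a → 0 < q a) (hsum : ∑ a, q a ≤ ∑ a, p a) :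
    ∑ a, negMulLog (p a) ≤ ∑ a, -(p a * log (q a)) :=
  calc ∑ a, negMulLog (p a) ≤ ∑ a, (-(p a * log (q a)) + (q a - p a)) :=
        sum_le_sum fun a _ ↦ negMulLog_le_neg_mul_log_add_sub (hp a) (hq a) (hpq a)
    _ ≤ ∑ a, -(p a * log (q a)) := by
        rw [sum_add_distrib, sum_sub_distrib]; linarith

lemma mul_log_div_le_mul_log_div {P Q : ℝ} (c : ℝ) (hP : 0 ≤ P) (hPQ : P ≤ Q) :
    P * log (c / Q) ≤ P * log (c / P) := by
  rcases hP.eq_or_lt with rfl | hP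
  · simp
  rcases eq_or_ne c 0 with rfl | hc
  · simp
  refine mul_le_mul_of_nonneg_left ?_ hP.le
  rw [log_div hc (hP.trans_le hPQ).ne', log_div hc hP.ne']
  linarith [log_le_log hP hPQ]

variable [DecidableEq β]

lemma sum_fiber_mul (g : α → β) (P : α → ℝ) (h : β → ℝ) :
    ∑ b, (∑ a with g a = b, P a) * h b = ∑ a, P a * h (g a) := by
  simp_rw [sum_mul]
  rw [← sum_fiberwise univ g fun a ↦ P a * h (g a)]
  exact sum_congr rfl fun b _ ↦ sum_congr rfl fun a ha ↦ by rw [(mem_filter.1 ha).2]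

lemma sum_fiber_mul_log_div_le (g : α → β) {P : α → ℝ} (hP : ∀ a, 0 ≤ P a) (c : ℝ) :
    ∑ b, (∑ a with g a = b, P a) * log (c / ∑ a with g a = b, P a) ≤
      ∑ a, P a * log (c / P a) := by
  rw [sum_fiber_mul g P fun b ↦ log (c / ∑ a with g a = b, P a)]
  refine sum_le_sum fun a _ ↦ mul_log_div_le_mul_log_div c (hP a) ?_
  exact single_le_sum (fun a' _ ↦ hP a') (mem_filter.2 ⟨mem_univ a, rfl⟩)

end FiniteSums

section Distribution

variable {Ω 𝒴 : Type*} [MeasurableSpace Ω] [Fintype 𝒴] {μ : Measure Ω}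

lemma entropy_eq_sum_negMulLog (X : Ω → 𝒴) :
    entropy μ X = ∑ a, negMulLog (μ.real {ω | X ω = a}) := by
  simp [entropy, negMulLog, measureReal_def]

variable [MeasurableSpace 𝒴] [MeasurableSingletonClass 𝒴]

lemma sum_measureReal_eq_one [IsProbabilityMeasure μ] {Y : Ω → 𝒴} (hY : Measurable Y) :
    ∑ v, μ.real {ω | Y ω = v} = 1 :=
  (sum_measureReal_preimage_singleton univ fun v _ ↦ hY (measurableSet_singleton v)).trans
    (by simp)

lemma measureReal_comp_inter_eq_sum [IsFiniteMeasure μ] {β : Type*} [DecidableEq β]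
    {Y : Ω → 𝒴} (hY : Measurable Y) (g : 𝒴 → β) (b : β) {s : Set Ω} (hs : MeasurableSet s) :
    μ.real ({ω | g (Y ω) = b} ∩ s) = ∑ v with g v = b, μ.real ({ω | Y ω = v} ∩ s) := by
  rw [← measureReal_biUnion_finset]
  · congr 1
    ext ω
    simp
  · intro v _ w _ hvw
    exact Set.disjoint_left.2 fun ω hv hw ↦ hvw (hv.1.symm.trans hw.1)
  · exact fun v _ ↦ (hY (measurableSet_singleton v)).inter hs

lemma entropy_comp_eq_sum [IsFiniteMeasure μ] {β : Type*} [Fintype β]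
    {Y : Ω → 𝒴} (hY : Measurable Y) (g : 𝒴 → β) :
    entropy μ (fun ω ↦ g (Y ω)) =
      ∑ v, -(μ.real {ω | Y ω = v} * log (μ.real {ω | g (Y ω) = g v})) := by
  classical
  have hfiber (b : β) : μ.real {ω | g (Y ω) = b} = ∑ v with g v = b, μ.real {ω | Y ω = v} := by
    simpa using measureReal_comp_inter_eq_sum hY g b MeasurableSet.univ (μ := μ)
  have := sum_fiber_mul g (fun v ↦ μ.real {ω | Y ω = v}) fun b ↦ -log (μ.real {ω | g (Y ω) = b})
  simp_rw [← hfiber, mul_neg] at this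
  simpa only [entropy_eq_sum_negMulLog, negMulLog, neg_mul, mul_neg] using this

lemma condEntropy_comp_le [IsFiniteMeasure μ] {β 𝒵 : Type*} [Fintype β] [Fintype 𝒵]
    [MeasurableSpace 𝒵] [MeasurableSingletonClass 𝒵] {Y : Ω → 𝒴} {Z : Ω → 𝒵}
    (hY : Measurable Y) (hZ : Measurable Z) (g : 𝒴 → β) :
    condEntropy μ (fun ω ↦ g (Y ω)) Z ≤ condEntropy μ Y Z := by
  classical
  refine sum_le_sum fun z _ ↦ ?_
  have hfiber (b : β) : μ.real {ω | g (Y ω) = b ∧ Z ω = z} =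
      ∑ v with g v = b, μ.real {ω | Y ω = v ∧ Z ω = z} :=
    measureReal_comp_inter_eq_sum hY g b (hZ (measurableSet_singleton z))
  simp only [← measureReal_def, hfiber]
  exact sum_fiber_mul_log_div_le g (fun _ ↦ measureReal_nonneg) _

lemma ProbabilityTheory.IdentDistrib.entropy_eq {Ω' : Type*} [MeasurableSpace Ω']
    {ν : Measure Ω'} {X : Ω → 𝒴} {X' : Ω' → 𝒴} (h : IdentDistrib X X' μ ν) :
    entropy μ X = entropy ν X' := by
  simp only [entropy_eq_sum_negMulLog, measureReal_def]
  exact sum_congr rfl fun a _ ↦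
    congrArg (fun m ↦ negMulLog m.toReal) (h.measure_mem_eq (measurableSet_singleton a))

end Distribution

lemma entropy_pi_le_sum {Ω : Type*} [MeasurableSpace Ω] {μ : Measure Ω} [IsProbabilityMeasure μ]
    {ι : Type*} [Fintype ι] [DecidableEq ι] {𝒳 : ι → Type*} [∀ i, Fintype (𝒳 i)]
    [∀ i, MeasurableSpace (𝒳 i)] [∀ i, MeasurableSingletonClass (𝒳 i)]
    {X : ∀ i, Ω → 𝒳 i} (hX : ∀ i, Measurable (X i)) :
    entropy μ (fun ω i ↦ X i ω) ≤ ∑ i, entropy μ (X i) := by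
  set T : Ω → ∀ i, 𝒳 i := fun ω i ↦ X i ω
  have hT : Measurable T := measurable_pi_lambda _ hX
  set p : (∀ i, 𝒳 i) → ℝ := fun v ↦ μ.real {ω | T ω = v}
  set q : (∀ i, 𝒳 i) → ℝ := fun v ↦ ∏ i, μ.real {ω | X i ω = v i}
  have hp_le (v : ∀ i, 𝒳 i) (i : ι) : p v ≤ μ.real {ω | X i ω = v i} :=
    measureReal_mono fun ω hω ↦ congrFun hω i
  have hq_pos (v : ∀ i, 𝒳 i) (hv : 0 < p v) : 0 < q v :=
    prod_pos fun i _ ↦ hv.trans_le (hp_le v i)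
  have hq_sum : ∑ v, q v = 1 := by
    rw [← Fintype.prod_sum fun i a ↦ μ.real {ω | X i ω = a}]
    exact prod_eq_one fun i _ ↦ sum_measureReal_eq_one (hX i)
  have hlog_q (v : ∀ i, 𝒳 i) :
      -(p v * log (q v)) = ∑ i, -(p v * log (μ.real {ω | X i ω = v i})) := by
    rcases (show 0 ≤ p v from measureReal_nonneg).eq_or_lt with hv | hv
    · simp [← hv]
    · rw [log_prod fun i _ ↦ (hv.trans_le (hp_le v i)).ne', mul_sum, sum_neg_distrib]
  calc entropy μ T = ∑ v, negMulLog (p v) := entropy_eq_sum_negMulLog T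
    _ ≤ ∑ v, -(p v * log (q v)) :=
        sum_negMulLog_le_sum_neg_mul_log (fun _ ↦ measureReal_nonneg)
          (fun _ ↦ prod_nonneg fun _ _ ↦ measureReal_nonneg) hq_pos
          (by rw [hq_sum, sum_measureReal_eq_one hT])
    _ = ∑ i, ∑ v, -(p v * log (μ.real {ω | X i ω = v i})) := by
        simp_rw [hlog_q]
        exact sum_comm
    _ = ∑ i, entropy μ (X i) :=
        sum_congr rfl fun i _ ↦ (entropy_comp_eq_sum hT fun v ↦ v i).symm

theorem mutualInfo_tuple_le_general
    {Ω 𝒳 𝒵 : Type*} [MeasurableSpace Ω] [Fintype 𝒳] [Fintype 𝒵]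
    [MeasurableSpace 𝒳] [MeasurableSingletonClass 𝒳]
    [MeasurableSpace 𝒵] [MeasurableSingletonClass 𝒵]
    (μ : Measure Ω) [IsProbabilityMeasure μ]
    (n : ℕ) (hn : 0 < n) (X : Fin n → Ω → 𝒳) (Z : Ω → 𝒵)
    (hmeas : ∀ i, Measurable (X i)) (hZ : Measurable Z)
    (hident : ∀ i, IdentDistrib (X i) (X ⟨0, hn⟩) μ μ) :
    ∀ j : Fin n,
      mutualInfo μ (fun ω => fun i => X i ω) Z ≤
        ((n : ℝ) - 1) * entropy μ (X ⟨0, hn⟩) + mutualInfo μ (X j) Z := by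
  intro j
  have hentropy (i : Fin n) : entropy μ (X i) = entropy μ (X ⟨0, hn⟩) := (hident i).entropy_eq
  have hjoint : entropy μ (fun ω i ↦ X i ω) ≤ n * entropy μ (X ⟨0, hn⟩) := by
    simpa [hentropy] using entropy_pi_le_sum (μ := μ) hmeas
  have hcond : condEntropy μ (X j) Z ≤ condEntropy μ (fun ω i ↦ X i ω) Z :=
    condEntropy_comp_le (measurable_pi_lambda _ hmeas) hZ fun v ↦ v j
  unfold mutualInfo
  linarith [hentropy j]

/-- For i.i.d. `X₁, …, Xₙ` and any `Z`, the mutual information between the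
joint tuple and `Z` satisfies `I((X₁, …, Xₙ); Z) ≤ (n − 1) · H(X₁) + I(X_j; Z)` for every `j`. -/
theorem mutualInfo_tuple_le
    {Ω 𝒳 𝒵 : Type*} [MeasurableSpace Ω] [Fintype 𝒳] [Fintype 𝒵]
    [MeasurableSpace 𝒳] [MeasurableSingletonClass 𝒳]
    [MeasurableSpace 𝒵] [MeasurableSingletonClass 𝒵]
    (μ : Measure Ω) [IsProbabilityMeasure μ]
    (n : ℕ) (hn : 0 < n) (X : Fin n → Ω → 𝒳) (Z : Ω → 𝒵)
    (hmeas : ∀ i, Measurable (X i)) (hZ : Measurable Z)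
    (hindep : iIndepFun X μ)
    (hident : ∀ i, IdentDistrib (X i) (X ⟨0, hn⟩) μ μ) :
    ∀ j : Fin n,
      mutualInfo μ (fun ω => fun i => X i ω) Z ≤
        ((n : ℝ) - 1) * entropy μ (X ⟨0, hn⟩) + mutualInfo μ (X j) Z :=
  mutualInfo_tuple_le_general μ n hn X Z hmeas hZ hident
end
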